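/- arXiv:math/0607591 — 4 statements merged into one kernel-verified Lean document; each statement's English description precedes it below -/
import Mathlib

section
/- If p₁ and p₂ are distinct odd primes with τ(p₁) ≠ 0 and τ(p₂) ≠ 0, then 2τ(p₁²)/τ(p₁)² ≠ 2τ(p₂²)/τ(p₂)². Equivalently, the map p ↦ p¹¹/τ(p)² is injective on odd primes with τ(p) ≠ 0. -/
/-!
Since `τ(p²) = τ(p)² - p¹¹`, the ratio equals `2 - 2 p¹¹ / τ(p)²`, so equal ratios would give
`p₁¹¹ / τ(p₁)² = p₂¹¹ / τ(p₂)²`. The `p₁`-adic valuation of the left side is `11` minus an even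
number, that of the right side is even.
-/

theorem prime_pow_div_sq_ne {p q k : ℕ} (hp : p.Prime) (hq : q.Prime) (hpq : p ≠ q) (hk : Odd k)
    {a b : ℚ} (ha : a ≠ 0) (hb : b ≠ 0) :
    (p : ℚ) ^ k / a ^ 2 ≠ (q : ℚ) ^ k / b ^ 2 := by
  have := Fact.mk hp
  have := Fact.mk hq
  intro h
  have hval := congrArg (padicValRat p) h
  rw [padicValRat.div (pow_ne_zero _ (by exact_mod_cast hp.ne_zero)) (pow_ne_zero _ ha),
    padicValRat.div (pow_ne_zero _ (by exact_mod_cast hq.ne_zero)) (pow_ne_zero _ hb)] at hval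
  simp only [padicValRat.pow, padicValRat.self hp.one_lt, padicValRat.of_nat,
    padicValNat_primes hpq] at hval
  obtain ⟨m, rfl⟩ := hk
  push_cast at hval
  omega

theorem two_mul_sub_div_sq {t x : ℚ} (ht : t ≠ 0) :
    2 * (t ^ 2 - x) / t ^ 2 = 2 - 2 * (x / t ^ 2) := by
  field_simp

theorem tau_ratio_injective_general (τ : ℕ → ℤ)
    (hp2 : ∀ p : ℕ, p.Prime → τ (p ^ 2) = (τ p) ^ 2 - (p : ℤ) ^ 11) :
    ∀ p₁ p₂ : ℕ, p₁.Prime → p₂.Prime → Odd p₁ → Odd p₂ → p₁ ≠ p₂ →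
      τ p₁ ≠ 0 → τ p₂ ≠ 0 →
      2 * (τ (p₁ ^ 2) : ℚ) / (τ p₁ : ℚ) ^ 2 ≠ 2 * (τ (p₂ ^ 2) : ℚ) / (τ p₂ : ℚ) ^ 2 := by
  intro p₁ p₂ h₁ h₂ _ _ hne ht₁ ht₂ heq
  have ht₁' : (τ p₁ : ℚ) ≠ 0 := Int.cast_ne_zero.mpr ht₁
  have ht₂' : (τ p₂ : ℚ) ≠ 0 := Int.cast_ne_zero.mpr ht₂
  rw [hp2 p₁ h₁, hp2 p₂ h₂] at heq
  push_cast at heq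
  rw [two_mul_sub_div_sq ht₁', two_mul_sub_div_sq ht₂'] at heq
  exact prime_pow_div_sq_ne (k := 11) h₁ h₂ hne (by decide) ht₁' ht₂'
    (mul_left_cancel₀ two_ne_zero (sub_right_injective heq))

/-- The rationals `2τ(p²)/τ(p)²` are distinct for distinct odd primes `p` with `τ(p) ≠ 0`. -/
theorem tau_ratio_injective (τ : ℕ → ℤ)
    (hp2 : ∀ p : ℕ, p.Prime → τ (p ^ 2) = (τ p) ^ 2 - (p : ℤ) ^ 11)
    (hDeligne : ∀ p : ℕ, p.Prime → (τ p) ^ 2 ≤ 4 * (p : ℤ) ^ 11)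
    (hτ3 : τ 3 = 252) :
    ∀ p₁ p₂ : ℕ, p₁.Prime → p₂.Prime → Odd p₁ → Odd p₂ → p₁ ≠ p₂ →
      τ p₁ ≠ 0 → τ p₂ ≠ 0 →
      2 * (τ (p₁ ^ 2) : ℚ) / (τ p₁ : ℚ) ^ 2 ≠ 2 * (τ (p₂ ^ 2) : ℚ) / (τ p₂ : ℚ) ^ 2 :=
  tau_ratio_injective_general τ hp2
end

section
/- For every sufficiently large s, setting k = lcm(2, 3, …, s+1) − 1 and n = 2^k, the number of distinct prime factors of τ(n) satisfies ω(τ(n)) ≥ s + O(1); in particular ω(τ(n)) ≥ (1/log 2 + o(1))·log log n along this sequence. -/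
open Filter

/-- `ω(m)` : number of distinct prime factors of an integer (`ω(0)=ω(±1)=0`). -/
def omegaZ (m : ℤ) : ℕ := m.natAbs.primeFactors.card

/-!
A divisor `d > r₀` of `k + 1` gives a primitive prime divisor of `τ(2^(d-1))`, which divides
`τ(2^k)`, and distinct `d` give distinct primes; hence `ω(τ(2^k)) ≥ #divisors(k + 1) - r₀`.
For `k + 1 = lcm(1, …, s+1)` all of `1, …, s+1` are divisors, which gives `ω ≥ s + 1 - r₀`.
For the second bound, `log log n ≤ log lcm(1, …, s+1) = ψ(s+1) = O(s)` by Chebyshev, while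
`lcm(1, …, s+1)` has at least `(log₂(s+1) + 1)·(s+1)/2` divisors (a power of two up to the full
`2`-part times an odd number `≤ s+1`), eventually more than any fixed multiple of `s`.
-/

open Finset

section PrimitiveDivisors

variable {u : ℕ → ℤ} {r₀ : ℕ}

theorem ne_zero_of_forall_primitive_prime
    (hprim : ∀ r, r₀ ≤ r → ∃ q : ℕ, q.Prime ∧ (q : ℤ) ∣ u r ∧ ∀ r' < r, ¬ (q : ℤ) ∣ u r')
    (k : ℕ) : u k ≠ 0 := by
  intro hk
  obtain ⟨q, -, -, hq⟩ := hprim (max r₀ (k + 1)) (le_max_left _ _)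
  exact hq k (lt_max_of_lt_right k.lt_succ_self) (hk ▸ dvd_zero _)

theorem card_divisors_sub_le_omegaZ (hdvd : ∀ r s, r + 1 ∣ s + 1 → u r ∣ u s)
    (hprim : ∀ r, r₀ ≤ r → ∃ q : ℕ, q.Prime ∧ (q : ℤ) ∣ u r ∧ ∀ r' < r, ¬ (q : ℤ) ∣ u r')
    (k : ℕ) : #(k + 1).divisors - r₀ ≤ omegaZ (u k) := by
  have hk := ne_zero_of_forall_primitive_prime hprim k
  have hlarge : ∀ d ∈ (k + 1).divisors \ Icc 1 r₀, d ∣ k + 1 ∧ r₀ < d := by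
    intro d hd
    simp only [Finset.mem_sdiff, Nat.mem_divisors, Finset.mem_Icc, not_and, not_le] at hd
    have := Nat.pos_of_dvd_of_pos hd.1.1 k.succ_pos
    exact ⟨hd.1.1, by omega⟩
  choose! q hq using hprim
  have hmaps : ∀ d ∈ (k + 1).divisors \ Icc 1 r₀, q (d - 1) ∈ (u k).natAbs.primeFactors := by
    intro d hd
    obtain ⟨hdk, hd₀⟩ := hlarge d hd
    obtain ⟨hqp, hqd, -⟩ := hq (d - 1) (by omega)
    have : u (d - 1) ∣ u k := hdvd _ _ (by rwa [Nat.sub_add_cancel (by omega)])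
    exact Nat.mem_primeFactors.2 ⟨hqp, Int.natCast_dvd.1 (hqd.trans this), by simpa using hk⟩
  have hinj : Set.InjOn (fun d ↦ q (d - 1)) ↑((k + 1).divisors \ Icc 1 r₀) := by
    have hnot_lt : ∀ d ∈ (k + 1).divisors \ Icc 1 r₀, ∀ d' ∈ (k + 1).divisors \ Icc 1 r₀,
        q (d - 1) = q (d' - 1) → ¬ d < d' := by
      intro d hd d' hd' heq hlt
      have hd₀ := (hlarge d hd).2
      have hd₀' := (hlarge d' hd').2
      exact (hq (d' - 1) (by omega)).2.2 (d - 1) (by omega) (heq ▸ (hq (d - 1) (by omega)).2.1)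
    exact fun d hd d' hd' heq ↦ le_antisymm (le_of_not_gt (hnot_lt d' hd' d hd heq.symm))
      (le_of_not_gt (hnot_lt d hd d' hd' heq))
  calc #(k + 1).divisors - r₀ = #(k + 1).divisors - #(Icc 1 r₀) := by rw [Nat.card_Icc]; rfl
    _ ≤ #((k + 1).divisors \ Icc 1 r₀) := le_card_sdiff _ _
    _ ≤ omegaZ (u k) := card_le_card_of_injOn _ hmaps hinj

end PrimitiveDivisors

namespace Nat

theorem lcm_Icc_two_eq_lcmUpto (n : ℕ) : (Icc 2 n).lcm id = lcmUpto n := by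
  rcases n.eq_zero_or_pos with rfl | hn
  · rfl
  · rw [lcmUpto, ← insert_Icc_add_one_left_eq_Icc (a := 1) hn, lcm_insert]
    exact (lcm_one_left _).symm

theorem dvd_lcmUpto {d n : ℕ} (hd : d ∈ Icc 1 n) : d ∣ lcmUpto n :=
  Finset.dvd_lcm hd

theorem le_card_divisors_lcmUpto (n : ℕ) : n ≤ #(lcmUpto n).divisors := by
  calc n = #(Icc 1 n) := by simp
    _ ≤ #(lcmUpto n).divisors := card_le_card fun d hd ↦
      mem_divisors.2 ⟨dvd_lcmUpto hd, lcmUpto_ne_zero n⟩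

theorem log_two_add_one_mul_le_card_divisors_lcmUpto (n : ℕ) :
    (log 2 n + 1) * ((n + 1) / 2) ≤ #(lcmUpto n).divisors := by
  set L := lcmUpto n
  set m := L / 2 ^ L.factorization 2
  have hcop : Coprime (2 ^ log 2 n) m := by
    rw [← factorization_lcmUpto n prime_two]
    exact (coprime_ordCompl prime_two (lcmUpto_ne_zero n)).pow_left _
  have hL : L = 2 ^ log 2 n * m := by
    rw [← factorization_lcmUpto n prime_two]
    exact (ordProj_mul_ordCompl_eq_self L 2).symm
  have hodd : (range ((n + 1) / 2)).image (fun i ↦ 2 * i + 1) ⊆ m.divisors := by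
    intro j hj
    simp only [Finset.mem_image, mem_range] at hj
    obtain ⟨i, hi, rfl⟩ := hj
    have hj : 2 * i + 1 ∣ 2 ^ log 2 n * m := hL ▸ dvd_lcmUpto (mem_Icc.2 ⟨by omega, by omega⟩)
    have hcop_odd : Coprime (2 * i + 1) (2 ^ log 2 n) :=
      Nat.coprime_comm.1 ((Nat.coprime_two_left.2 (by simp [parity_simps])).pow_left _)
    exact mem_divisors.2 ⟨hcop_odd.dvd_of_dvd_mul_left hj,
      right_ne_zero_of_mul (by rw [← hL]; exact lcmUpto_ne_zero n)⟩
  calc (log 2 n + 1) * ((n + 1) / 2) ≤ #(2 ^ log 2 n).divisors * #m.divisors := by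
        rw [divisors_prime_pow prime_two, card_map, card_range]
        have hinj : Function.Injective (fun i ↦ 2 * i + 1) := fun a b h ↦ by grind
        refine Nat.mul_le_mul_left _ ?_
        simpa [Finset.card_image_of_injective _ hinj] using card_le_card hodd
    _ = #L.divisors := by rw [hL, hcop.card_divisors_mul]

end Nat

namespace Real

theorem log_log_two_pow_le (k : ℕ) : log (log (2 ^ k)) ≤ log (k + 1) := by
  rcases k.eq_zero_or_pos with rfl | hk
  · simp
  have hlog2 := log_two_lt_d9
  rw [log_pow]
  exact log_le_log (by positivity) (by nlinarith [(Nat.one_le_cast (α := ℝ)).2 hk])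

theorem log_log_two_pow_nonneg {k : ℕ} (hk : 2 ≤ k) : 0 ≤ log (log (2 ^ k)) := by
  have hlog2 := log_two_gt_d9
  rw [log_pow]
  exact log_nonneg (by nlinarith [(Nat.ofNat_le_cast (α := ℝ)).2 hk])

theorem log_log_two_pow_lcmUpto_sub_one_le (n : ℕ) :
    log (log (2 ^ (Nat.lcmUpto n - 1))) ≤ 6 * n := by
  have hlog4 : log 4 ≤ 2 := by
    rw [show (4 : ℝ) = 2 ^ 2 by norm_num, log_pow]
    norm_num
    linarith [log_two_lt_d9]
  calc log (log (2 ^ (Nat.lcmUpto n - 1))) ≤ log ((Nat.lcmUpto n - 1 : ℕ) + 1) :=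
        log_log_two_pow_le _
    _ = log (Nat.lcmUpto n) := by rw [← Nat.cast_add_one, Nat.sub_add_cancel (Nat.lcmUpto_pos n)]
    _ = Chebyshev.psi n := (Chebyshev.psi_eq_log_lcmUpto n).symm
    _ ≤ (log 4 + 4) * n := Chebyshev.psi_le_const_mul_self n.cast_nonneg
    _ ≤ 6 * n := by gcongr; linarith

end Real

/-- For sufficiently large `s`, with `k = lcm(2,…,s+1) − 1` and `n = 2^k`, one has
`ω(τ(n)) ≥ s + O(1)`, and in particular `ω(τ(n)) ≥ (1/log 2 + o(1))·log log n`. -/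
theorem omega_tau_two_pow_lcm (τ : ℕ → ℤ)
    (hdvd : ∀ r s : ℕ, (r + 1) ∣ (s + 1) → τ (2 ^ r) ∣ τ (2 ^ s))
    (hprimitive : ∃ r₀ : ℕ, ∀ r : ℕ, r₀ ≤ r → ∃ q : ℕ, q.Prime ∧
      (q : ℤ) ∣ τ (2 ^ r) ∧ ∀ r' : ℕ, r' < r → ¬ (q : ℤ) ∣ τ (2 ^ r')) :
    (∃ C : ℝ, ∀ᶠ s : ℕ in atTop,
      (s : ℝ) ≤ (omegaZ (τ (2 ^ ((Finset.Icc 2 (s + 1)).lcm id - 1))) : ℝ) + C) ∧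
    (∀ ε : ℝ, 0 < ε → ∀ᶠ s : ℕ in atTop,
      (1 / Real.log 2 - ε) *
          Real.log (Real.log ((2 : ℝ) ^ ((Finset.Icc 2 (s + 1)).lcm id - 1 : ℕ))) ≤
        (omegaZ (τ (2 ^ ((Finset.Icc 2 (s + 1)).lcm id - 1))) : ℝ)) := by
  obtain ⟨r₀, hprim⟩ := hprimitive
  simp only [Nat.lcm_Icc_two_eq_lcmUpto]
  have hω (n : ℕ) : #(Nat.lcmUpto n).divisors - r₀ ≤ omegaZ (τ (2 ^ (Nat.lcmUpto n - 1))) := by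
    simpa [Nat.sub_add_cancel (Nat.lcmUpto_pos n)] using
      card_divisors_sub_le_omegaZ (u := fun r ↦ τ (2 ^ r)) hdvd hprim (Nat.lcmUpto n - 1)
  refine ⟨⟨r₀, Eventually.of_forall fun s ↦ ?_⟩, fun ε hε ↦ ?_⟩
  · have := Nat.le_card_divisors_lcmUpto (s + 1)
    have := hω (s + 1)
    exact_mod_cast (by omega : s ≤ omegaZ _ + r₀)
  filter_upwards [eventually_ge_atTop (2 ^ 25), eventually_ge_atTop r₀] with s hs hr₀
  have hlog : 25 ≤ Nat.log 2 (s + 1) := Nat.le_log_of_pow_le one_lt_two (by omega)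
  have hcard : 26 * ((s + 2) / 2) ≤ #(Nat.lcmUpto (s + 1)).divisors :=
    (Nat.mul_le_mul_right _ (by omega)).trans
      (Nat.log_two_add_one_mul_le_card_divisors_lcmUpto (s + 1))
  have hω' : 12 * (s + 1) ≤ omegaZ (τ (2 ^ (Nat.lcmUpto (s + 1) - 1))) := by
    have := hω (s + 1)
    omega
  have hL : s + 1 ≤ Nat.lcmUpto (s + 1) :=
    (Nat.le_card_divisors_lcmUpto _).trans (Nat.card_divisors_le_self _)
  have hX₀ := Real.log_log_two_pow_nonneg (k := Nat.lcmUpto (s + 1) - 1) (by omega)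
  have hX := Real.log_log_two_pow_lcmUpto_sub_one_le (s + 1)
  have hcoef : 1 / Real.log 2 - ε ≤ 2 := by
    rw [sub_le_iff_le_add, div_le_iff₀ (Real.log_pos one_lt_two)]
    nlinarith [Real.log_two_gt_d9]
  calc _ ≤ 2 * Real.log (Real.log ((2 : ℝ) ^ (Nat.lcmUpto (s + 1) - 1))) := by gcongr
    _ ≤ 12 * (s + 1 : ℕ) := by push_cast at hX ⊢; linarith
    _ ≤ _ := by exact_mod_cast hω'
end

section
/- Let p be a prime with τ(p) ≠ 0, and write 2τ(p²)/τ(p)² = E/D and τ(p³)/τ(p)³ = F/D where D > 0 is the least common positive denominator. Then gcd(E,F) = gcd(D,E) = gcd(D,F) = 1, E − F = D, D ≤ C·p¹¹, max(|E|,|F|) ≤ C·p²², and max(|E|,|F|) ≥ c·p, for absolute constants C, c > 0. -/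
/-!
Put `w = 2p¹¹/τ(p)²`. By the recursions for `τ(p²)` and `τ(p³)` the two fractions are
`2 - w` and `1 - w`; they differ from `w` by integers, so their common denominator is
`D = den w`, and with `n = num w` one gets `E = 2D - n`, `F = D - n`. Everything then
follows from `gcd(n, D) = 1`, `n ∣ 2p¹¹`, `D ∣ τ(p)² ≤ 4p¹¹`, and the lower bound from
`p ∣ n = E - 2F`: for `p ≥ 5`, `τ(p)² < p¹²` has even `p`-adic valuation at most `10`,
while `n τ(p)² = 2p¹¹ D`.
-/

theorem Nat.Prime.pow_succ_dvd_of_pow_dvd_sq {p m k : ℕ} (hp : p.Prime) (hm : m ≠ 0)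
    (h : p ^ (2 * k + 1) ∣ m ^ 2) : p ^ (k + 1) ∣ m := by
  rw [hp.pow_dvd_iff_le_factorization (pow_ne_zero 2 hm), Nat.factorization_pow] at h
  rw [hp.pow_dvd_iff_le_factorization hm]
  simp only [Finsupp.smul_apply, smul_eq_mul] at h
  omega

theorem Int.prime_dvd_of_pow_dvd_mul_sq {p : ℕ} (hp : p.Prime) {n t : ℤ} {k : ℕ} (ht : t ≠ 0)
    (hlt : t ^ 2 < (p : ℤ) ^ (2 * k + 2)) (h : (p : ℤ) ^ (2 * k + 1) ∣ n * t ^ 2) :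
    (p : ℤ) ∣ n := by
  by_contra hn
  have hcop : IsCoprime ((p : ℤ) ^ (2 * k + 1)) n :=
    ((Nat.prime_iff_prime_int.mp hp).irreducible.coprime_iff_not_dvd.mpr hn).pow_left
  have hpt : p ^ (k + 1) ∣ t.natAbs := by
    refine hp.pow_succ_dvd_of_pow_dvd_sq (Int.natAbs_ne_zero.mpr ht) ?_
    rw [← Int.natAbs_pow, ← Int.natCast_dvd, Nat.cast_pow]
    exact hcop.dvd_of_dvd_mul_left h
  have hpt2 : (p : ℤ) ^ (2 * k + 2) ∣ t ^ 2 := by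
    rw [show 2 * k + 2 = (k + 1) * 2 by ring, pow_mul]
    exact pow_dvd_pow_of_dvd (by exact_mod_cast Int.natCast_dvd.mpr hpt) 2
  exact hlt.not_ge (Int.le_of_dvd (by positivity) hpt2)

theorem IsCoprime.two_mul_sub_and_sub {R : Type*} [CommRing R] {D n : R} (h : IsCoprime D n) :
    IsCoprime (2 * D - n) (D - n) ∧ IsCoprime D (2 * D - n) ∧ IsCoprime D (D - n) := by
  have hk (k : R) : IsCoprime D (k * D - n) := by
    rw [show k * D - n = -n + D * k by ring]
    exact h.neg_right.add_mul_left_right k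
  have h1 : IsCoprime D (D - n) := by simpa using hk 1
  refine ⟨?_, hk 2, h1⟩
  rw [show 2 * D - n = D + (D - n) * 1 by ring]
  exact h1.add_mul_left_left 1

namespace Rat

theorem lcm_den_two_sub_one_sub (w : ℚ) : Nat.lcm (2 - w).den (1 - w).den = w.den := by
  have h2 := intCast_sub_den 2 w
  have h1 := intCast_sub_den 1 w
  push_cast at h1 h2
  rw [h2, h1, Nat.lcm_self]

theorem num_divInt_mul_eq {a b : ℤ} (hb : b ≠ 0) : (a /. b).num * b = a * (a /. b).den := by
  have h : ((a /. b).num : ℚ) * b = a * (a /. b).den := by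
    rw [← mul_den_eq_num, divInt_eq_div]
    field_simp
  exact_mod_cast h

end Rat

theorem prime_dvd_num_two_mul_pow_divInt_sq {p : ℕ} (hp : p.Prime) (hp5 : 5 ≤ p) {t : ℤ}
    (ht : t ≠ 0) (hDel : t ^ 2 ≤ 4 * (p : ℤ) ^ 11) :
    (p : ℤ) ∣ (Rat.divInt (2 * (p : ℤ) ^ 11) (t ^ 2)).num := by
  refine Int.prime_dvd_of_pow_dvd_mul_sq (k := 5) hp ht ?_ ?_
  · calc t ^ 2 ≤ 4 * (p : ℤ) ^ 11 := hDel
      _ < p * p ^ 11 := by gcongr; exact_mod_cast hp5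
      _ = p ^ (2 * 5 + 2) := by ring
  · rw [Rat.num_divInt_mul_eq (pow_ne_zero 2 ht)]
    exact (dvd_mul_left ((p : ℤ) ^ 11) 2).mul_right _

theorem num_den_bounds_of_eq_two_mul_pow_divInt_sq {p : ℕ} (hp : p.Prime) {t : ℤ} (ht : t ≠ 0)
    (hDel : t ^ 2 ≤ 4 * (p : ℤ) ^ 11) {w : ℚ} (hw : w = Rat.divInt (2 * (p : ℤ) ^ 11) (t ^ 2)) :
    0 < w.num ∧ w.num ≤ 2 * p ^ 11 ∧ (w.den : ℤ) ≤ 4 * p ^ 11 ∧ (5 ≤ p → (p : ℤ) ≤ w.num) := by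
  have hp0 : (0 : ℤ) < p := by exact_mod_cast hp.pos
  have hn : 0 < w.num := Rat.num_pos.mpr (by rw [hw, Rat.divInt_eq_div]; positivity)
  subst hw
  refine ⟨hn, Int.le_of_dvd (by positivity) (Rat.num_dvd _ (pow_ne_zero 2 ht)),
    (Int.le_of_dvd (by positivity) (Rat.den_dvd _ _)).trans hDel, fun hp5 => ?_⟩
  exact Int.le_of_dvd hn (prime_dvd_num_two_mul_pow_divInt_sq hp hp5 ht hDel)

theorem unit_equation_height_bounds {p D : ℕ} {n : ℤ} (hD : 0 < D) (hn : 0 < n)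
    (hDle : (D : ℤ) ≤ 4 * p ^ 11) (hnle : n ≤ 2 * p ^ 11) (hpn : 5 ≤ p → (p : ℤ) ≤ n) :
    (D : ℝ) ≤ 10 * (p : ℝ) ^ 11 ∧
      (max (2 * (D : ℤ) - n).natAbs ((D : ℤ) - n).natAbs : ℝ) ≤ 10 * (p : ℝ) ^ 22 ∧
      1 / 4 * (p : ℝ) ≤ (max (2 * (D : ℤ) - n).natAbs ((D : ℤ) - n).natAbs : ℝ) := by
  have hp22 : (p : ℤ) ^ 11 ≤ p ^ 22 := by
    rw [show 22 = 11 * 2 by rfl, pow_mul]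
    exact_mod_cast Nat.le_self_pow two_ne_zero (p ^ 11)
  rw [← Nat.cast_max]
  set M := max (2 * (D : ℤ) - n).natAbs ((D : ℤ) - n).natAbs
  have hDle' : (D : ℤ) ≤ 10 * p ^ 11 := by omega
  have hM : (M : ℤ) ≤ 10 * p ^ 22 := by omega
  have hpM : (p : ℤ) ≤ 4 * M := by omega
  have hpM' : (p : ℝ) ≤ 4 * M := by exact_mod_cast hpM
  exact ⟨by exact_mod_cast hDle', by exact_mod_cast hM, by linarith⟩

/-- Writing `2τ(p²)/τ(p)² = E/D` and `τ(p³)/τ(p)³ = F/D` over the least common positive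
denominator `D`, one has `gcd(E,F) = gcd(D,E) = gcd(D,F) = 1`, `E − F = D`,
`D ≤ C·p¹¹`, `max(|E|,|F|) ≤ C·p²²` and `max(|E|,|F|) ≥ c·p`. -/
theorem tau_unit_equation_numerators :
    ∃ C c : ℝ, 0 < C ∧ 0 < c ∧
      ∀ τ : ℕ → ℤ,
        (∀ p : ℕ, p.Prime → τ (p ^ 2) = (τ p) ^ 2 - (p : ℤ) ^ 11) →
        (∀ p : ℕ, p.Prime → τ (p ^ 3) = τ p * ((τ p) ^ 2 - 2 * (p : ℤ) ^ 11)) →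
        (∀ p : ℕ, p.Prime → (τ p) ^ 2 ≤ 4 * (p : ℤ) ^ 11) →
        ∀ p : ℕ, p.Prime → τ p ≠ 0 →
          ∀ u v : ℚ, u = 2 * (τ (p ^ 2) : ℚ) / (τ p : ℚ) ^ 2 →
            v = (τ (p ^ 3) : ℚ) / (τ p : ℚ) ^ 3 →
          ∀ D : ℕ, D = Nat.lcm u.den v.den →
          ∀ E F : ℤ, (E : ℚ) = u * D → (F : ℚ) = v * D →
            IsCoprime E F ∧ IsCoprime (D : ℤ) E ∧ IsCoprime (D : ℤ) F ∧
            E - F = (D : ℤ) ∧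
            (D : ℝ) ≤ C * (p : ℝ) ^ 11 ∧
            (max E.natAbs F.natAbs : ℝ) ≤ C * (p : ℝ) ^ 22 ∧
            c * (p : ℝ) ≤ (max E.natAbs F.natAbs : ℝ) := by
  refine ⟨10, 1 / 4, by norm_num, by norm_num, ?_⟩
  intro τ hτ2 hτ3 hτ p hp ht u v hu hv D hD E F hE hF
  set w := Rat.divInt (2 * (p : ℤ) ^ 11) (τ p ^ 2) with hw
  have htQ : (τ p : ℚ) ≠ 0 := by exact_mod_cast ht
  have hu' : u = 2 - w := by
    rw [hu, hτ2 p hp, hw, Rat.divInt_eq_div]; push_cast; field_simp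
  have hv' : v = 1 - w := by
    rw [hv, hτ3 p hp, hw, Rat.divInt_eq_div]; push_cast; field_simp
  rw [hu', hv', Rat.lcm_den_two_sub_one_sub] at hD
  subst hD
  rw [hu', sub_mul, Rat.mul_den_eq_num] at hE
  rw [hv', sub_mul, one_mul, Rat.mul_den_eq_num] at hF
  obtain rfl : E = 2 * w.den - w.num := by exact_mod_cast hE
  obtain rfl : F = w.den - w.num := by exact_mod_cast hF
  obtain ⟨hn, hnle, hDle, hpn⟩ := num_den_bounds_of_eq_two_mul_pow_divInt_sq hp ht (hτ p hp) hw
  obtain ⟨hcopEF, hcopDE, hcopDF⟩ := (Rat.isCoprime_num_den w).symm.two_mul_sub_and_sub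
  exact ⟨hcopEF, hcopDE, hcopDF, by ring, unit_equation_height_bounds w.den_pos hn hDle hnle hpn⟩
end

section
/- Assume the ABC-conjecture. Then for primes p → ∞ with τ(p) ≠ 0, the largest squarefree divisor satisfies Q(τ(p)τ(p²)τ(p³)) ≥ p^{1+o(1)}, and consequently P(τ(p)τ(p²)τ(p³)) ≥ (1 + o(1))·log p. -/
open Filter

/-- The largest prime factor of an integer, with `P(0) = P(±1) = 1`. -/
def largestPrimeFactor (m : ℤ) : ℕ := max 1 (m.natAbs.primeFactors.sup id)

/-- The largest squarefree divisor (radical) of an integer, with `Q(0) = Q(±1) = 1`. -/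
def radZ (m : ℤ) : ℕ := m.natAbs.primeFactors.prod id

lemma sq_ne_ppow {p : ℕ} (hp : p.Prime) (t : ℤ) (ht : t ≠ 0) : t ^ 2 ≠ (p : ℤ) ^ 11 := by
  intro h
  have h' : t.natAbs ^ 2 = p ^ 11 := by
    have := congrArg Int.natAbs h
    simpa [Int.natAbs_pow] using this
  have hn : t.natAbs ≠ 0 := by simpa using ht
  have h1 : (t.natAbs ^ 2).factorization p = 2 * t.natAbs.factorization p := by
    simp [Nat.factorization_pow, mul_comm]
  have h2 : ((p : ℕ) ^ 11).factorization p = 11 := by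
    simp [Nat.Prime.factorization_pow hp]
  rw [h'] at h1
  omega

lemma sq_ne_two_ppow {p : ℕ} (hp : p.Prime) (hge3 : 3 ≤ p) (t : ℤ) (ht : t ≠ 0) :
    t ^ 2 ≠ 2 * (p : ℤ) ^ 11 := by
  intro h
  have h' : t.natAbs ^ 2 = 2 * p ^ 11 := by
    have := congrArg Int.natAbs h
    simpa [Int.natAbs_mul, Int.natAbs_pow] using this
  have hn : t.natAbs ≠ 0 := by simpa using ht
  have h1 : (t.natAbs ^ 2).factorization p = 2 * t.natAbs.factorization p := by
    simp [Nat.factorization_pow, mul_comm]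
  have h2 : (2 * (p : ℕ) ^ 11).factorization p = 11 := by
    rw [Nat.factorization_mul (by norm_num) (by positivity)]
    have : (2 : ℕ).factorization p = 0 :=
      Nat.factorization_eq_zero_of_not_dvd
        (fun hd => absurd (Nat.le_of_dvd (by norm_num) hd) (by omega))
    simp [this, Nat.Prime.factorization_pow hp]
  rw [h'] at h1
  omega

lemma radZ_pos (m : ℤ) : 0 < radZ m :=
  Finset.prod_pos fun _ hq => (Nat.prime_of_mem_primeFactors hq).pos

lemma le_lpf {m : ℤ} {q : ℕ} (hq : q ∈ m.natAbs.primeFactors) : q ≤ largestPrimeFactor m :=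
  le_trans (Finset.le_sup (f := id) hq) (le_max_right _ _)

lemma radZ_le_four_pow (m : ℤ) : radZ m ≤ 4 ^ largestPrimeFactor m := by
  refine le_trans ?_ (primorial_le_4_pow (largestPrimeFactor m))
  unfold primorial radZ
  refine Finset.prod_le_prod_of_subset_of_one_le' ?_ ?_
  · intro q hq
    simp only [Finset.mem_filter, Finset.mem_range]
    exact ⟨by have := le_lpf hq; omega, Nat.prime_of_mem_primeFactors hq⟩
  · intro i hi _
    simp only [Finset.mem_filter] at hi
    exact hi.2.one_lt.le

lemma pf_subset {p : ℕ} (hp : p.Prime) (t c d : ℤ) (ht : t ≠ 0) (hc : c ≠ 0) (hd : d ≠ 0) :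
    ((t ^ 2 * (-(p : ℤ) ^ 11) * c).natAbs).primeFactors ⊆
      insert p ((t * c * d).natAbs).primeFactors := by
  intro q hq
  rw [Nat.mem_primeFactors] at hq
  obtain ⟨hqp, hqd, -⟩ := hq
  have hqZ : (q : ℤ) ∣ t ^ 2 * (-(p : ℤ) ^ 11) * c :=
    Int.dvd_natAbs.mp (Int.natCast_dvd_natCast.mpr hqd)
  have hqPrime : Prime (q : ℤ) := Int.prime_iff_natAbs_prime.mpr (by simpa using hqp)
  have hmne : (t * c * d) ≠ 0 := mul_ne_zero (mul_ne_zero ht hc) hd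
  have hgoal : q = p ∨ (q : ℤ) ∣ t * c * d := by
    rcases hqPrime.dvd_mul.mp hqZ with h | h
    · rcases hqPrime.dvd_mul.mp h with h | h
      · exact Or.inr (dvd_mul_of_dvd_left (dvd_mul_of_dvd_left (hqPrime.dvd_of_dvd_pow h) c) d)
      · left
        have h1 : (q : ℤ) ∣ (p : ℤ) ^ 11 := (dvd_neg.mp h)
        have : q ∣ p ^ 11 := by exact_mod_cast h1
        exact (Nat.prime_dvd_prime_iff_eq hqp hp).mp (hqp.dvd_of_dvd_pow this)
    · exact Or.inr (dvd_mul_of_dvd_left (dvd_mul_of_dvd_right h t) d)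
  rcases hgoal with h | h
  · simp [h]
  · refine Finset.mem_insert_of_mem ?_
    rw [Nat.mem_primeFactors]
    exact ⟨hqp, Int.natCast_dvd_natCast.mp (Int.dvd_natAbs.mpr h), by simpa using hmne⟩

set_option maxHeartbeats 1000000 in
/-- Under the ABC-conjecture, `Q(τ(p)τ(p²)τ(p³)) ≥ p^{1+o(1)}` and consequently
`P(τ(p)τ(p²)τ(p³)) ≥ (1 + o(1))·log p`, as `p → ∞` through primes with `τ(p) ≠ 0`. -/
theorem radical_tau_triple_of_abc (τ : ℕ → ℤ)
    (hp2 : ∀ p : ℕ, p.Prime → τ (p ^ 2) = (τ p) ^ 2 - (p : ℤ) ^ 11)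
    (hp3 : ∀ p : ℕ, p.Prime → τ (p ^ 3) = τ p * ((τ p) ^ 2 - 2 * (p : ℤ) ^ 11))
    (hDeligne : ∀ p : ℕ, p.Prime → (τ p) ^ 2 ≤ 4 * (p : ℤ) ^ 11)
    (abc : ∀ ε : ℝ, 0 < ε → ∃ K : ℝ, 0 < K ∧ ∀ a b c : ℤ,
      a ≠ 0 → b ≠ 0 → c ≠ 0 → IsCoprime a b → a + b = c →
      K * (max a.natAbs (max b.natAbs c.natAbs) : ℝ) ^ (1 - ε) ≤ (radZ (a * b * c) : ℝ)) :
    ∀ ε : ℝ, 0 < ε → ∀ᶠ p : ℕ in atTop, p.Prime → τ p ≠ 0 →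
      (p : ℝ) ^ (1 - ε) ≤ (radZ (τ p * τ (p ^ 2) * τ (p ^ 3)) : ℝ) ∧
      (1 - ε) * Real.log p ≤ (largestPrimeFactor (τ p * τ (p ^ 2) * τ (p ^ 3)) : ℝ) := by
  intro ε hε
  obtain ⟨K, hK, habc⟩ := abc (1/2) (by norm_num)
  obtain ⟨N0, hN0⟩ := exists_nat_ge (1 / K ^ 2)
  have hlogev : ∀ᶠ p : ℕ in atTop, -Real.log K ≤ Real.log p :=
    (Real.tendsto_log_atTop.comp tendsto_natCast_atTop_atTop).eventually_ge_atTop _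
  filter_upwards [eventually_ge_atTop 3, eventually_ge_atTop (N0 + 1), hlogev]
    with p hge3 hpN hplog hp ht
  set t := τ p with htdef
  set m : ℤ := τ p * τ (p ^ 2) * τ (p ^ 3) with hmdef
  have ht2 : τ (p ^ 2) ≠ 0 := by
    rw [hp2 p hp]; exact sub_ne_zero.mpr (sq_ne_ppow hp t ht)
  have ht3 : τ (p ^ 3) ≠ 0 := by
    rw [hp3 p hp]; exact mul_ne_zero ht (sub_ne_zero.mpr (sq_ne_two_ppow hp hge3 t ht))
  have hm : m ≠ 0 := mul_ne_zero (mul_ne_zero ht ht2) ht3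
  have hp1R : (1 : ℝ) ≤ (p : ℝ) := by exact_mod_cast Nat.one_le_iff_ne_zero.mpr (by omega)
  have hlogp : (0 : ℝ) ≤ Real.log p := Real.log_nonneg hp1R
  -- main claim
  have hmain : (p : ℝ) ≤ (radZ m : ℝ) ∧ Real.log p ≤ (largestPrimeFactor m : ℝ) := by
    by_cases hpt : (p : ℤ) ∣ t
    · -- p divides τ p : then p is a prime factor of m
      have hmem : p ∈ m.natAbs.primeFactors := by
        rw [Nat.mem_primeFactors]
        refine ⟨hp, Int.natCast_dvd_natCast.mp (Int.dvd_natAbs.mpr ?_), by simpa using hm⟩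
        exact dvd_mul_of_dvd_left (dvd_mul_of_dvd_left hpt _) _
      have hR : p ≤ radZ m :=
        Nat.le_of_dvd (radZ_pos m) (Finset.dvd_prod_of_mem id hmem)
      have hP : p ≤ largestPrimeFactor m := le_lpf hmem
      constructor
      · exact_mod_cast hR
      · calc Real.log p ≤ (p : ℝ) := Real.log_le_self (by positivity)
          _ ≤ (largestPrimeFactor m : ℝ) := by exact_mod_cast hP
    · -- p does not divide τ p : apply abc to (t², -p¹¹, τ(p²))
      have hcop : IsCoprime (t ^ 2) (-(p : ℤ) ^ 11) := by
        have hc1 : IsCoprime t (p : ℤ) := by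
          rw [Int.isCoprime_iff_gcd_eq_one]
          have : ¬ p ∣ t.natAbs := fun hd =>
            hpt (Int.dvd_natAbs.mp (Int.natCast_dvd_natCast.mpr hd))
          have := (Nat.Prime.coprime_iff_not_dvd hp).mpr this
          simpa [Int.gcd, Nat.coprime_comm] using this.symm
        exact (hc1.pow).neg_right
      have hb : -(p : ℤ) ^ 11 ≠ 0 := by
        simp only [ne_eq, neg_eq_zero, pow_eq_zero_iff]; positivity
      have hsum : t ^ 2 + (-(p : ℤ) ^ 11) = τ (p ^ 2) := by rw [hp2 p hp]; ring
      have habc' := habc (t ^ 2) (-(p : ℤ) ^ 11) (τ (p ^ 2))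
        (pow_ne_zero 2 ht) hb ht2 hcop hsum
      set M : ℕ := max (t ^ 2).natAbs (max ((-(p : ℤ) ^ 11)).natAbs (τ (p ^ 2)).natAbs) with hMdef
      have hMb : p ^ 11 ≤ M := by
        have : ((-(p : ℤ) ^ 11)).natAbs = p ^ 11 := by
          simp [Int.natAbs_pow]
        rw [hMdef, ← this]
        exact le_max_of_le_right (le_max_left _ _)
      -- radical comparison
      have hradle : radZ (t ^ 2 * (-(p : ℤ) ^ 11) * τ (p ^ 2)) ≤ p * radZ m := by
        have hsub := pf_subset hp t (τ (p ^ 2)) (τ (p ^ 3)) ht ht2 ht3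
        have h1 : radZ (t ^ 2 * (-(p : ℤ) ^ 11) * τ (p ^ 2)) ≤
            (insert p (m.natAbs.primeFactors)).prod id := by
          refine Finset.prod_le_prod_of_subset_of_one_le' hsub ?_
          intro i hi _
          rcases Finset.mem_insert.mp hi with h | h
          · exact h ▸ hp.one_lt.le
          · exact (Nat.prime_of_mem_primeFactors h).one_lt.le
        refine h1.trans ?_
        by_cases hpm : p ∈ m.natAbs.primeFactors
        · rw [Finset.insert_eq_self.mpr hpm]
          exact Nat.le_mul_of_pos_left _ hp.pos
        · rw [Finset.prod_insert hpm]
          exact le_of_eq (by simp [radZ])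
      -- squaring
      have hRnn : (0 : ℝ) ≤ (radZ m : ℝ) := Nat.cast_nonneg _
      have habc2 : K * (M : ℝ) ^ ((1 : ℝ) - 1/2) ≤
          (radZ (t ^ 2 * (-(p : ℤ) ^ 11) * τ (p ^ 2)) : ℝ) := by
        rw [hMdef]; push_cast; convert habc' using 3 <;> norm_num
      have hchain : K * (M : ℝ) ^ ((1 : ℝ) - 1/2) ≤ (p : ℝ) * (radZ m : ℝ) := by
        refine habc2.trans ?_
        calc ((radZ (t ^ 2 * (-(p : ℤ) ^ 11) * τ (p ^ 2)) : ℕ) : ℝ)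
            ≤ ((p * radZ m : ℕ) : ℝ) := by exact_mod_cast hradle
          _ = (p : ℝ) * (radZ m : ℝ) := by push_cast; ring
      have hsq : ((M : ℝ) ^ ((1 : ℝ) - 1/2)) ^ 2 = (M : ℝ) := by
        rw [show (1 : ℝ) - 1/2 = ((2 : ℕ) : ℝ)⁻¹ by norm_num]
        exact Real.rpow_inv_natCast_pow (Nat.cast_nonneg M) two_ne_zero
      have hKM : K ^ 2 * (M : ℝ) ≤ ((p : ℝ) * (radZ m : ℝ)) ^ 2 := by
        have hnn : (0 : ℝ) ≤ K * (M : ℝ) ^ ((1 : ℝ) - 1/2) := by positivity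
        have := pow_le_pow_left₀ hnn hchain 2
        calc K ^ 2 * (M : ℝ) = (K * (M : ℝ) ^ ((1 : ℝ) - 1/2)) ^ 2 := by
              rw [mul_pow, hsq]
          _ ≤ ((p : ℝ) * (radZ m : ℝ)) ^ 2 := this
      have hp11 : ((p : ℝ)) ^ 11 ≤ (M : ℝ) := by
        calc ((p : ℝ)) ^ 11 = ((p ^ 11 : ℕ) : ℝ) := by push_cast; ring
          _ ≤ (M : ℝ) := by exact_mod_cast hMb
      have key : K ^ 2 * (p : ℝ) ^ 11 ≤ (p : ℝ) ^ 2 * (radZ m : ℝ) ^ 2 := by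
        calc K ^ 2 * (p : ℝ) ^ 11 ≤ K ^ 2 * (M : ℝ) := by
              exact mul_le_mul_of_nonneg_left hp11 (by positivity)
          _ ≤ ((p : ℝ) * (radZ m : ℝ)) ^ 2 := hKM
          _ = (p : ℝ) ^ 2 * (radZ m : ℝ) ^ 2 := by ring
      -- K^2 * p^7 ≥ 1
      have hK7 : (1 : ℝ) ≤ K ^ 2 * (p : ℝ) ^ 7 := by
        have hpb : (1 / K ^ 2 : ℝ) ≤ (p : ℝ) := by
          calc (1 / K ^ 2 : ℝ) ≤ (N0 : ℝ) := hN0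
            _ ≤ (p : ℝ) := by exact_mod_cast Nat.le_of_lt hpN
        have hp7 : (p : ℝ) ≤ (p : ℝ) ^ 7 := le_self_pow₀ hp1R (by norm_num)
        have hK2 : (0 : ℝ) < K ^ 2 := by positivity
        calc (1 : ℝ) = K ^ 2 * (1 / K ^ 2) := by field_simp
          _ ≤ K ^ 2 * (p : ℝ) := mul_le_mul_of_nonneg_left hpb hK2.le
          _ ≤ K ^ 2 * (p : ℝ) ^ 7 := mul_le_mul_of_nonneg_left hp7 hK2.le
      have hppos : (0 : ℝ) < (p : ℝ) := by linarith
      -- p² ≤ R²  and  K² p⁹ ≤ R²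
      have hK9 : K ^ 2 * (p : ℝ) ^ 9 ≤ (radZ m : ℝ) ^ 2 := by
        have h1 : (K ^ 2 * (p : ℝ) ^ 9) * (p : ℝ) ^ 2 ≤ (radZ m : ℝ) ^ 2 * (p : ℝ) ^ 2 := by
          calc (K ^ 2 * (p : ℝ) ^ 9) * (p : ℝ) ^ 2 = K ^ 2 * (p : ℝ) ^ 11 := by ring
            _ ≤ (p : ℝ) ^ 2 * (radZ m : ℝ) ^ 2 := key
            _ = (radZ m : ℝ) ^ 2 * (p : ℝ) ^ 2 := by ring
        exact le_of_mul_le_mul_right h1 (by positivity)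
      have hpR2 : (p : ℝ) ^ 2 ≤ (radZ m : ℝ) ^ 2 := by
        calc (p : ℝ) ^ 2 = (p : ℝ) ^ 2 * 1 := by ring
          _ ≤ (p : ℝ) ^ 2 * (K ^ 2 * (p : ℝ) ^ 7) :=
              mul_le_mul_of_nonneg_left hK7 (by positivity)
          _ = K ^ 2 * (p : ℝ) ^ 9 := by ring
          _ ≤ (radZ m : ℝ) ^ 2 := hK9
      have hpR : (p : ℝ) ≤ (radZ m : ℝ) := by nlinarith [hpR2, hRnn, hppos.le]
      refine ⟨hpR, ?_⟩
      -- largest prime factor part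
      have h4P : (radZ m : ℝ) ≤ (4 : ℝ) ^ (largestPrimeFactor m) := by
        exact_mod_cast radZ_le_four_pow m
      have h16 : (radZ m : ℝ) ^ 2 ≤ (16 : ℝ) ^ (largestPrimeFactor m) := by
        calc (radZ m : ℝ) ^ 2 ≤ ((4 : ℝ) ^ (largestPrimeFactor m)) ^ 2 :=
              pow_le_pow_left₀ hRnn h4P 2
          _ = (16 : ℝ) ^ (largestPrimeFactor m) := by
              rw [← pow_mul, mul_comm, pow_mul]; norm_num
      have hlhs_pos : (0 : ℝ) < K ^ 2 * (p : ℝ) ^ 9 := by positivity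
      have hlog := Real.log_le_log hlhs_pos (hK9.trans h16)
      rw [Real.log_mul (by positivity) (by positivity), Real.log_pow, Real.log_pow,
        Real.log_pow] at hlog
      push_cast at hlog
      have hlog16 : Real.log 16 ≤ 3 := by
        rw [Real.log_le_iff_le_exp (by norm_num)]
        have hE : Real.exp 1 ^ 3 = Real.exp 3 := by
          rw [← Real.exp_nat_mul]; norm_num
        have h1 : (2.7182818283 : ℝ) ^ 3 ≤ Real.exp 1 ^ 3 :=
          pow_le_pow_left₀ (by norm_num) Real.exp_one_gt_d9.le 3
        rw [hE] at h1
        norm_num at h1 ⊢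
        linarith
      have hPnn : (0 : ℝ) ≤ (largestPrimeFactor m : ℝ) := Nat.cast_nonneg _
      have h16P : (largestPrimeFactor m : ℝ) * Real.log 16 ≤
          3 * (largestPrimeFactor m : ℝ) := by
        calc (largestPrimeFactor m : ℝ) * Real.log 16 ≤ (largestPrimeFactor m : ℝ) * 3 :=
            mul_le_mul_of_nonneg_left hlog16 hPnn
          _ = 3 * (largestPrimeFactor m : ℝ) := by ring
      -- hlog : 2 * log K + 9 * log p ≤ P * log 16
      linarith [hlog, h16P, hplog]
  obtain ⟨hRad, hP⟩ := hmain
  constructor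
  · calc (p : ℝ) ^ (1 - ε) ≤ (p : ℝ) ^ (1 : ℝ) :=
        Real.rpow_le_rpow_of_exponent_le hp1R (by linarith)
      _ = (p : ℝ) := Real.rpow_one _
      _ ≤ _ := hRad
  · calc (1 - ε) * Real.log p ≤ 1 * Real.log p := by nlinarith [hlogp]
      _ = Real.log p := one_mul _
      _ ≤ _ := hP
end
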